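/- For every modal theory T, the operator D_T on belief pairs defined by D_T(P,S) = ({I : h((S,P),I)(φ)=true for all φ∈T}, {I : h((P,S),I)(φ)=true for all φ∈T}) is monotone with respect to the knowledge ordering, and hence has a least fixpoint (the Kripke-Kleene fixpoint). -/
import Mathlib


/-- Modal propositional formulas: atoms, Boolean connectives, and the modal operator `K`. -/
inductive MF (At : Type) : Type
  | atom : At → MF At
  | neg : MF At → MF At
  | conj : MF At → MF At → MF At
  | disj : MF At → MF At → MF At
  | box : MF At → MF At

/-- The belief-pair truth function `h((P,S),I)`. -/
def hb {At : Type} (P S : Set (At → Bool)) (I : At → Bool) : MF At → Prop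
  | .atom p => I p = true
  | .neg φ => ¬ hb S P I φ
  | .conj φ ψ => hb P S I φ ∧ hb P S I ψ
  | .disj φ ψ => hb P S I φ ∨ hb P S I ψ
  | .box φ => ∀ J ∈ P, hb P S J φ

/-- The knowledge ordering on belief pairs. -/
def kle {At : Type} (B1 B2 : Set (At → Bool) × Set (At → Bool)) : Prop :=
  B2.1 ⊆ B1.1 ∧ B1.2 ⊆ B2.2

/-- The 4-valued operator `D_T` on belief pairs for a modal theory `T`. -/
def DT {At : Type} (T : Set (MF At)) (B : Set (At → Bool) × Set (At → Bool)) :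
    Set (At → Bool) × Set (At → Bool) :=
  ({I | ∀ φ ∈ T, hb B.2 B.1 I φ}, {I | ∀ φ ∈ T, hb B.1 B.2 I φ})

lemma hb_mono {At : Type} (φ : MF At) :
    ∀ P1 S1 P2 S2 : Set (At → Bool), P2 ⊆ P1 → S1 ⊆ S2 → ∀ I,
      (hb P1 S1 I φ → hb P2 S2 I φ) ∧ (hb S2 P2 I φ → hb S1 P1 I φ) := by
  induction φ with
  | atom p => intro _ _ _ _ _ _ I; exact ⟨id, id⟩
  | neg φ ih =>
      intro P1 S1 P2 S2 hP hS I
      exact ⟨fun h hc => h ((ih P1 S1 P2 S2 hP hS I).2 hc),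
             fun h hc => h ((ih P1 S1 P2 S2 hP hS I).1 hc)⟩
  | conj φ ψ ihφ ihψ =>
      intro P1 S1 P2 S2 hP hS I
      exact ⟨fun h => ⟨(ihφ P1 S1 P2 S2 hP hS I).1 h.1, (ihψ P1 S1 P2 S2 hP hS I).1 h.2⟩,
             fun h => ⟨(ihφ P1 S1 P2 S2 hP hS I).2 h.1, (ihψ P1 S1 P2 S2 hP hS I).2 h.2⟩⟩
  | disj φ ψ ihφ ihψ =>
      intro P1 S1 P2 S2 hP hS I
      exact ⟨fun h => h.elim (fun h => Or.inl ((ihφ P1 S1 P2 S2 hP hS I).1 h))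
                           (fun h => Or.inr ((ihψ P1 S1 P2 S2 hP hS I).1 h)),
             fun h => h.elim (fun h => Or.inl ((ihφ P1 S1 P2 S2 hP hS I).2 h))
                           (fun h => Or.inr ((ihψ P1 S1 P2 S2 hP hS I).2 h))⟩
  | box φ ih =>
      intro P1 S1 P2 S2 hP hS I
      exact ⟨fun h J hJ => (ih P1 S1 P2 S2 hP hS J).1 (h J (hP hJ)),
             fun h J hJ => (ih P1 S1 P2 S2 hP hS J).2 (h J (hS hJ))⟩

lemma DT_mono {At : Type} (T : Set (MF At)) :
    ∀ B1 B2, kle B1 B2 → kle (DT T B1) (DT T B2) := by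
  intro B1 B2 ⟨h1, h2⟩
  constructor
  · intro I hI φ hφ
    exact (hb_mono φ B1.1 B1.2 B2.1 B2.2 h1 h2 I).2 (hI φ hφ)
  · intro I hI φ hφ
    exact (hb_mono φ B1.1 B1.2 B2.1 B2.2 h1 h2 I).1 (hI φ hφ)

/-- `D_T` is monotone with respect to the knowledge ordering and hence has a least
fixpoint: the Kripke-Kleene fixpoint of `T`. -/
theorem DT_monotone_and_least_fixpoint {At : Type} (T : Set (MF At)) :
    (∀ B1 B2, kle B1 B2 → kle (DT T B1) (DT T B2)) ∧
      (∃ B, DT T B = B ∧ ∀ B', DT T B' = B' → kle B B') := by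
  refine ⟨DT_mono T, ?_⟩
  -- work in the complete lattice Q := (Set _)ᵒᵈ × Set _
  let Q := (Set (At → Bool))ᵒᵈ × Set (At → Bool)
  let toQ : Set (At → Bool) × Set (At → Bool) → Q :=
    fun B => (OrderDual.toDual B.1, B.2)
  let ofQ : Q → Set (At → Bool) × Set (At → Bool) :=
    fun B => (OrderDual.ofDual B.1, B.2)
  have key : ∀ B1 B2, kle B1 B2 ↔ toQ B1 ≤ toQ B2 := by
    intro B1 B2
    constructor
    · intro ⟨h1, h2⟩; exact ⟨h1, h2⟩
    · intro ⟨h1, h2⟩; exact ⟨h1, h2⟩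
  let g : Q →o Q := ⟨fun B => toQ (DT T (ofQ B)), by
    intro a b hab
    exact (key (DT T (ofQ a)) (DT T (ofQ b))).1
      (DT_mono T (ofQ a) (ofQ b) ⟨hab.1, hab.2⟩)⟩
  refine ⟨ofQ (OrderHom.lfp g), ?_, ?_⟩
  · have h := OrderHom.map_lfp g
    have : toQ (DT T (ofQ (OrderHom.lfp g))) = OrderHom.lfp g := h
    have h2 : ofQ (toQ (DT T (ofQ (OrderHom.lfp g)))) = ofQ (OrderHom.lfp g) :=
      congrArg ofQ this
    exact h2
  · intro B' hB'
    have hfix : g (toQ B') = toQ B' := by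
      show toQ (DT T (ofQ (toQ B'))) = toQ B'
      have : ofQ (toQ B') = B' := rfl
      rw [this, hB']
    have := OrderHom.lfp_le_fixed g hfix
    exact (key (ofQ (OrderHom.lfp g)) B').2 this
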